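/- Let A be an m×n real matrix with rank m (rows linearly independent), B ∈ ℝ^m, α ∈ ℝ^n, β ∈ ℝ. If every solution X of A X + B = 0 satisfies α·X + β ≥ 0, then there exists Λ ∈ ℝ^m with α = AᵀΛ and β - Λ·B ≥ 0. -/

import Mathlib

theorem liu_hard_direction (m n : ℕ)
    (A : Matrix (Fin m) (Fin n) ℝ) (B : Fin m → ℝ)
    (α : Fin n → ℝ) (β : ℝ)
    (hrank : A.rank = m)
    (h : ∀ X : Fin n → ℝ, A.mulVec X + B = 0 → (∑ b, α b * X b) + β ≥ 0) :
    ∃ Λ : Fin m → ℝ, α = A.transpose.mulVec Λ ∧ β - ∑ a, Λ a * B a ≥ 0 := by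
  classical
  -- the linear functional x ↦ α ⬝ x
  let f : (Fin n → ℝ) →ₗ[ℝ] ℝ :=
    { toFun := fun x => ∑ b, α b * x b
      map_add' := by
        intro x y
        simp [mul_add, Finset.sum_add_distrib]
      map_smul' := by
        intro c x
        simp [Finset.mul_sum, mul_left_comm] }
  -- surjectivity of mulVec from rank condition
  have hrange : LinearMap.range A.mulVecLin = ⊤ := by
    apply Submodule.eq_top_of_finrank_eq
    rw [← Matrix.rank, hrank]
    simp [Module.finrank_pi]
  obtain ⟨s, hs⟩ := A.mulVecLin.exists_rightInverse_of_surjective hrange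
  have hsec : ∀ y, A.mulVec (s y) = y := by
    intro y
    have := congrFun (congrArg DFunLike.coe hs) y
    simpa [Matrix.mulVecLin] using this
  -- a particular solution
  set X₀ : Fin n → ℝ := s (-B) with hX₀def
  have hX₀ : A.mulVec X₀ + B = 0 := by
    rw [hX₀def, hsec]; simp
  -- α vanishes on the kernel
  have hker : ∀ x, A.mulVec x = 0 → f x = 0 := by
    intro x hx
    by_contra hc
    set c := f x with hcdef
    set t : ℝ := -(f X₀ + β + 1) / c with htdef
    have hsol : A.mulVec (X₀ + t • x) + B = 0 := by
      rw [Matrix.mulVec_add, Matrix.mulVec_smul, hx]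
      simpa using hX₀
    have := h (X₀ + t • x) hsol
    have hval : (∑ b, α b * (X₀ + t • x) b) = f X₀ + t * c := by
      have := f.map_add X₀ (t • x)
      have h2 := f.map_smul t x
      simp only [f, LinearMap.coe_mk, AddHom.coe_mk] at this h2 ⊢
      rw [this, h2]; rfl
    rw [hval, htdef] at this
    rw [div_mul_cancel₀ _ hc] at this
    linarith
  -- factor f through A
  have hfact : ∀ x, f x = f (s (A.mulVec x)) := by
    intro x
    have hk : A.mulVec (s (A.mulVec x) - x) = 0 := by
      rw [Matrix.mulVec_sub, hsec, sub_self]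
    have := hker _ hk
    rw [map_sub] at this
    linarith
  set Λ : Fin m → ℝ := fun a => f (s (Pi.single a 1)) with hΛdef
  have hg : ∀ y : Fin m → ℝ, f (s y) = ∑ a, y a * Λ a := by
    intro y
    have := LinearMap.pi_apply_eq_sum_univ (f.comp s) y
    simp only [LinearMap.comp_apply, smul_eq_mul] at this
    rw [this]
    refine Finset.sum_congr rfl fun a _ => ?_
    have he : (fun j => if a = j then (1:ℝ) else 0) = Pi.single a 1 := by
      ext j; simp [Pi.single_apply, eq_comm]
    rw [he]
  refine ⟨Λ, ?_, ?_⟩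
  · funext b
    have h1 : α b = f (Pi.single b 1) := by
      simp only [f, LinearMap.coe_mk, AddHom.coe_mk]
      rw [Finset.sum_eq_single b] <;> simp +contextual [Pi.single_apply]
    rw [h1, hfact, hg, Matrix.mulVec_single_one]
    simp only [Matrix.mulVec, dotProduct, Matrix.transpose_apply, Matrix.col_apply]
  · have hineq := h X₀ hX₀
    have hfX₀ : f X₀ = -∑ a, Λ a * B a := by
      rw [hX₀def, hg]
      rw [← Finset.sum_neg_distrib]
      refine Finset.sum_congr rfl fun a _ => ?_
      rw [Pi.neg_apply, neg_mul, mul_comm]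
    simp only [f, LinearMap.coe_mk, AddHom.coe_mk] at hfX₀
    linarith
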